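/- arXiv:2107.03745 — 4 statements merged into one kernel-verified Lean document; each statement's English description precedes it below -/
import Mathlib

section
/- The set Λ = {(z₁,z₂,z₃) ∈ O³ : z₁ ≡ z₂ ≡ z₃ mod α, z₁+z₂+z₃ ≡ 0 mod ᾱ} is a free O-module of rank 3, generated by e₁ = (0,α,α), e₂ = (0,0,2), e₃ = (1,1,ᾱ), where O = Z[α], α = (1+i√7)/2 and ᾱ = (1-i√7)/2. -/
noncomputable section

/-- `α = (1+i√7)/2`. -/
def Kalpha : ℂ := (1 + Complex.I * Real.sqrt 7) / 2

/-- `ᾱ = (1-i√7)/2`. -/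
def Kalphabar : ℂ := (1 - Complex.I * Real.sqrt 7) / 2

/-- Membership in the ring `𝒪 = ℤ[α] = ℤ + ℤα`. -/
def inO (z : ℂ) : Prop := ∃ m n : ℤ, z = (m : ℂ) + (n : ℂ) * Kalpha

def Ke1 : Fin 3 → ℂ := ![0, Kalpha, Kalpha]
def Ke2 : Fin 3 → ℂ := ![0, 0, 2]
def Ke3 : Fin 3 → ℂ := ![1, 1, Kalphabar]

/-!
Coordinatewise, `z = c₁e₁ + c₂e₂ + c₃e₃` is the triangular system `z₁ = c₃`, `z₂ = αc₁ + c₃`,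
`z₃ = αc₁ + 2c₂ + ᾱc₃`, so the coefficients are unique and forced: `c₃ = z₁`,
`c₁ = (z₂ - z₁)/α` and `c₂ = (z₃ - αc₁ - ᾱz₁)/2`. The congruence `z₁ ≡ z₂ mod α` puts `c₁` in `𝒪`,
and since `2 = αᾱ` the remaining two conditions put `c₂` in `𝒪`. Conversely, the coordinates of
an `𝒪`-combination satisfy the congruences because `ᾱ ≡ 1 mod α` and `2`, `2 + ᾱ` are
multiples of `ᾱ`.
-/

theorem Kalphabar_eq : Kalphabar = 1 - Kalpha := by
  unfold Kalpha Kalphabar; ring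

theorem Kalpha_mul_self : Kalpha * Kalpha = Kalpha - 2 := by
  have h7 : (Real.sqrt 7 : ℂ) * Real.sqrt 7 = 7 := by
    rw [← Complex.ofReal_mul, Real.mul_self_sqrt (by norm_num)]
    norm_num
  unfold Kalpha
  linear_combination ((Real.sqrt 7 : ℂ) * Real.sqrt 7 / 4) * Complex.I_mul_I - (1 / 4 : ℂ) * h7

theorem Kalpha_mul_Kalphabar : Kalpha * Kalphabar = 2 := by
  linear_combination (-1 : ℂ) * Kalpha_mul_self + Kalpha * Kalphabar_eq

theorem Kalpha_ne_zero : Kalpha ≠ 0 := by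
  intro h
  have h2 := Kalpha_mul_self
  rw [h] at h2
  norm_num at h2

def subringO : Subring ℂ where
  carrier := {z | inO z}
  one_mem' := ⟨1, 0, by simp⟩
  zero_mem' := ⟨0, 0, by simp⟩
  add_mem' := by
    rintro _ _ ⟨m, n, rfl⟩ ⟨p, q, rfl⟩
    exact ⟨m + p, n + q, by push_cast; ring⟩
  neg_mem' := by
    rintro _ ⟨m, n, rfl⟩
    exact ⟨-m, -n, by push_cast; ring⟩
  mul_mem' := by
    rintro _ _ ⟨m, n, rfl⟩ ⟨p, q, rfl⟩
    refine ⟨m * p - 2 * (n * q), m * q + n * p + n * q, ?_⟩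
    push_cast
    linear_combination ((n : ℂ) * q) * Kalpha_mul_self

theorem Kalpha_mem_subringO : Kalpha ∈ subringO := ⟨0, 1, by push_cast; ring⟩

theorem Kalphabar_mem_subringO : Kalphabar ∈ subringO :=
  Kalphabar_eq ▸ sub_mem (one_mem _) Kalpha_mem_subringO

def InLattice (z : Fin 3 → ℂ) : Prop :=
  (∀ i, z i ∈ subringO) ∧
    (∃ t ∈ subringO, z 0 - z 1 = Kalpha * t) ∧
    (∃ t ∈ subringO, z 1 - z 2 = Kalpha * t) ∧
    (∃ s ∈ subringO, z 0 + z 1 + z 2 = Kalphabar * s)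

def combination (c : Fin 3 → ℂ) : Fin 3 → ℂ := c 0 • Ke1 + c 1 • Ke2 + c 2 • Ke3

theorem combination_eq (c : Fin 3 → ℂ) :
    combination c = ![c 2, c 0 * Kalpha + c 2, c 0 * Kalpha + c 1 * 2 + c 2 * Kalphabar] := by
  ext i
  fin_cases i <;> simp [combination, Ke1, Ke2, Ke3]

theorem combination_injective : Function.Injective combination := by
  intro c d h
  simp only [combination_eq, Matrix.vecCons_inj, and_true] at h
  obtain ⟨h2, h0, h1⟩ := h
  have h0 : c 0 = d 0 := mul_right_cancel₀ Kalpha_ne_zero (by linear_combination h0 - h2)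
  have h1 : c 1 = d 1 := by linear_combination (h1 - Kalpha * h0 - Kalphabar * h2) / 2
  ext i
  fin_cases i <;> assumption

theorem inLattice_combination {c : Fin 3 → ℂ} (hc : ∀ i, c i ∈ subringO) :
    InLattice (combination c) := by
  have hα := Kalpha_mem_subringO
  have hαbar := Kalphabar_mem_subringO
  have hαα := Kalpha_mul_Kalphabar
  rw [combination_eq]
  refine ⟨?_, ⟨-c 0, neg_mem (hc 0), ?_⟩,
    ⟨c 2 - Kalphabar * c 1, sub_mem (hc 2) (mul_mem hαbar (hc 1)), ?_⟩,
    ⟨Kalpha * (Kalpha * c 0 + c 1) + (Kalpha + 1) * c 2, ?_, ?_⟩⟩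
  · intro i
    fin_cases i <;> simp only [Fin.zero_eta, Fin.mk_one, Fin.reduceFinMk, Matrix.cons_val] <;>
      apply_rules [add_mem, mul_mem, ofNat_mem]
  · simp only [Matrix.cons_val]
    ring
  · simp only [Matrix.cons_val]
    linear_combination c 1 * hαα - c 2 * Kalphabar_eq
  · apply_rules [add_mem, mul_mem, one_mem]
  · simp only [Matrix.cons_val]
    linear_combination -(c 0 * Kalpha + c 1 + c 2) * hαα

theorem exists_combination_eq {z : Fin 3 → ℂ} (hz : InLattice z) :
    ∃ c : Fin 3 → ℂ, (∀ i, c i ∈ subringO) ∧ combination c = z := by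
  obtain ⟨hzO, ⟨t₁, ht₁O, ht₁⟩, ⟨t₂, ht₂O, ht₂⟩, ⟨s, hsO, hs⟩⟩ := hz
  -- the middle entry is `(z 2 + α t₁ - ᾱ z 0) / 2`, rewritten using `α (z 0 + z 1 + z 2) = 2 s`
  refine ⟨![-t₁, s + Kalpha * Kalpha * t₁ - t₂ - Kalpha * z 0, z 0], ?_, ?_⟩
  · intro i
    fin_cases i <;> simp only [Fin.zero_eta, Fin.mk_one, Fin.reduceFinMk, Matrix.cons_val]
    · exact neg_mem ht₁O
    · have hα := Kalpha_mem_subringO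
      exact sub_mem (sub_mem (add_mem hsO (mul_mem (mul_mem hα hα) ht₁O)) ht₂O) (mul_mem hα (hzO 0))
    · exact hzO 0
  · rw [combination_eq]
    ext i
    fin_cases i <;> simp only [Fin.zero_eta, Fin.mk_one, Fin.reduceFinMk, Matrix.cons_val]
    · linear_combination ht₁
    · linear_combination (1 - 2 * Kalpha) * ht₁ + (1 - Kalpha) * ht₂ - Kalpha * hs +
        (s - t₂) * Kalpha_mul_self + (z 0 - Kalpha * s) * Kalphabar_eq

/-- `Λ = {z ∈ 𝒪³ : z₁ ≡ z₂ ≡ z₃ mod α, z₁+z₂+z₃ ≡ 0 mod ᾱ}` is the free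
`𝒪`-module with basis `e₁, e₂, e₃`: every element of `Λ` has a unique
representation as an `𝒪`-linear combination of `e₁, e₂, e₃`, and conversely
every such combination lies in `Λ`. -/
theorem lattice_free_rank_three_over_O :
    ∀ z : Fin 3 → ℂ,
      ((∀ i, inO (z i)) ∧
        (∃ t, inO t ∧ z 0 - z 1 = Kalpha * t) ∧
        (∃ t, inO t ∧ z 1 - z 2 = Kalpha * t) ∧
        (∃ s, inO s ∧ z 0 + z 1 + z 2 = Kalphabar * s)) ↔
      (∃! c : Fin 3 → ℂ, (∀ i, inO (c i)) ∧
        z = c 0 • Ke1 + c 1 • Ke2 + c 2 • Ke3) := by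
  intro z
  constructor
  · intro hz
    obtain ⟨c, hcO, rfl⟩ := exists_combination_eq hz
    exact ⟨c, ⟨hcO, rfl⟩, fun d hd => combination_injective hd.2.symm⟩
  · rintro ⟨c, ⟨hcO, rfl⟩, -⟩
    exact inLattice_combination hcO
end
end

section
/- The three matrices r₁ = [[1,0,0],[0,0,1],[0,1,0]], r₂ = [[1,0,0],[0,1,0],[0,0,-1]], and r₃ = (1/2)[[1,-1,-α],[-1,1,-α],[-ᾱ,-ᾱ,0]] (with α = (1+i√7)/2) satisfy the relations r₁² = r₂² = r₃² = (r₁r₂)⁴ = (r₂r₃)⁴ = (r₃r₁)³ = (r₁r₂r₁r₃)³ = 1. -/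
/-!
Since `α = (1 + i√7)/2` is a root of `x² - x + 2` and `ᾱ = 1 - α`, every entry of `r₃` lies in
`½ ℤ[α]`. Multiplying out, each relation becomes nine polynomial identities in `α`, which hold
modulo `α² = α - 2`.
-/

noncomputable section

def r1 : Matrix (Fin 3) (Fin 3) ℂ := !![1,0,0; 0,0,1; 0,1,0]
def r2 : Matrix (Fin 3) (Fin 3) ℂ := !![1,0,0; 0,1,0; 0,0,-1]
def r3 : Matrix (Fin 3) (Fin 3) ℂ :=
  (1/2 : ℂ) • !![1,-1,-Kalpha; -1,1,-Kalpha; -Kalphabar,-Kalphabar,0]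

theorem Kalpha_sq : Kalpha ^ 2 = Kalpha - 2 := by
  have h7 : (Real.sqrt 7 : ℂ) ^ 2 = 7 := by
    exact_mod_cast Real.sq_sqrt (by norm_num : (0 : ℝ) ≤ 7)
  unfold Kalpha
  linear_combination ((Real.sqrt 7 : ℂ) ^ 2 / 4) * Complex.I_sq - h7 / 4

theorem r3_eq :
    r3 = !![1/2, -1/2, -Kalpha/2; -1/2, 1/2, -Kalpha/2; (Kalpha - 1)/2, (Kalpha - 1)/2, 0] := by
  simp only [r3, Kalphabar_eq, Matrix.smul_of, Matrix.smul_cons, smul_eq_mul, Matrix.smul_empty,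
    EmbeddingLike.apply_eq_iff_eq, Matrix.vecCons_inj]
  grind

theorem r1_sq : r1 ^ 2 = 1 := by
  simp only [sq, r1, Matrix.mul_fin_three, Matrix.one_fin_three,
    EmbeddingLike.apply_eq_iff_eq, Matrix.vecCons_inj]
  grind

theorem r2_sq : r2 ^ 2 = 1 := by
  simp only [sq, r2, Matrix.mul_fin_three, Matrix.one_fin_three,
    EmbeddingLike.apply_eq_iff_eq, Matrix.vecCons_inj]
  grind

theorem r3_sq : r3 ^ 2 = 1 := by
  simp only [sq, r3_eq, Matrix.mul_fin_three, Matrix.one_fin_three,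
    EmbeddingLike.apply_eq_iff_eq, Matrix.vecCons_inj]
  grind [Kalpha_sq]

theorem r1_mul_r2_pow_four : (r1 * r2) ^ 4 = 1 := by
  simp only [pow_succ, pow_zero, one_mul, r1, r2, Matrix.mul_fin_three, Matrix.one_fin_three,
    EmbeddingLike.apply_eq_iff_eq, Matrix.vecCons_inj]
  grind

theorem r2_mul_r3_pow_four : (r2 * r3) ^ 4 = 1 := by
  simp only [pow_succ, pow_zero, one_mul, r2, r3_eq, Matrix.mul_fin_three, Matrix.one_fin_three,
    EmbeddingLike.apply_eq_iff_eq, Matrix.vecCons_inj]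
  grind [Kalpha_sq]

theorem r3_mul_r1_pow_three : (r3 * r1) ^ 3 = 1 := by
  simp only [pow_succ, pow_zero, one_mul, r1, r3_eq, Matrix.mul_fin_three, Matrix.one_fin_three,
    EmbeddingLike.apply_eq_iff_eq, Matrix.vecCons_inj]
  grind [Kalpha_sq]

theorem r1_mul_r2_mul_r1_mul_r3_pow_three : (r1 * r2 * r1 * r3) ^ 3 = 1 := by
  simp only [pow_succ, pow_zero, one_mul, r1, r2, r3_eq, Matrix.mul_fin_three, Matrix.one_fin_three,
    EmbeddingLike.apply_eq_iff_eq, Matrix.vecCons_inj]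
  grind [Kalpha_sq]

/-- The generators `r₁, r₂, r₃` of the reflection group `G₃₃₆` satisfy
the Shephard–Todd relations. -/
theorem generators_relations :
    r1 ^ 2 = 1 ∧ r2 ^ 2 = 1 ∧ r3 ^ 2 = 1 ∧
    (r1 * r2) ^ 4 = 1 ∧ (r2 * r3) ^ 4 = 1 ∧ (r3 * r1) ^ 3 = 1 ∧
    (r1 * r2 * r1 * r3) ^ 3 = 1 :=
  ⟨r1_sq, r2_sq, r3_sq, r1_mul_r2_pow_four, r2_mul_r3_pow_four, r3_mul_r1_pow_three,
    r1_mul_r2_mul_r1_mul_r3_pow_three⟩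

end
end

section
/- The point η₁ = (i√7/7, (7+i√7)/14, 1 − 2i√7/7) ∈ C³ satisfies g₇(η₁) − η₁ ∈ Λ, i.e. the image of η₁ in J = C³/Λ is a fixed point of g₇; moreover η₁ ∉ Λ, so this fixed point is nonzero. -/
noncomputable section

def LambdaZ : Submodule ℤ (Fin 3 → ℂ) :=
  Submodule.span ℤ {Ke1, Ke2, Ke3, Kalpha • Ke1, Kalpha • Ke2, Kalpha • Ke3}

def g7 : Matrix (Fin 3) (Fin 3) ℂ :=
  (1/2 : ℂ) • !![-1,1,Kalpha; -Kalphabar,-Kalphabar,0; 1,-1,Kalpha]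

def eta1 : Fin 3 → ℂ :=
  ![Complex.I * Real.sqrt 7 / 7,
    (7 + Complex.I * Real.sqrt 7) / 14,
    1 - 2 * Complex.I * Real.sqrt 7 / 7]

/-! Writing ω = i√7, so that ω² = -7 and α = (1 + ω)/2, a direct computation gives
g₇η₁ - η₁ = -e₁ + e₃ + αe₁ + αe₂ ∈ Λ. For η₁ ∉ Λ, look at first coordinates: those of the
generators of Λ are 0, 1 and α, so every vector of Λ has first coordinate in ℤ + ℤα, whose
imaginary parts lie in (√7/2)ℤ; but the first coordinate i√7/7 of η₁ has imaginary part √7/7. -/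

lemma I_mul_sqrt_seven_sq : (Complex.I * Real.sqrt 7) ^ 2 = -7 := by
  rw [mul_pow, Complex.I_sq, ← Complex.ofReal_pow, Real.sq_sqrt (by norm_num)]
  push_cast
  ring

lemma g7_mulVec_eta1_sub_eta1 :
    g7.mulVec eta1 - eta1 = -Ke1 + Ke3 + Kalpha • Ke1 + Kalpha • Ke2 := by
  have hω := I_mul_sqrt_seven_sq
  simp only [g7, eta1, Ke1, Ke2, Ke3, Kalpha, Kalphabar, mul_assoc (2 : ℂ)]
  generalize Complex.I * Real.sqrt 7 = ω at hω ⊢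
  funext i
  fin_cases i <;>
    simp only [Matrix.mulVec, dotProduct, Fin.sum_univ_three, Matrix.smul_apply, Matrix.of_apply,
      Pi.sub_apply, Pi.add_apply, Pi.neg_apply, Pi.smul_apply, smul_eq_mul, Fin.zero_eta, Fin.mk_one,
      Fin.reduceFinMk, Matrix.cons_val]
  · linear_combination (-1/14 : ℂ) * hω
  · linear_combination (-11/56 : ℂ) * hω
  · linear_combination (-9/28 : ℂ) * hω

lemma Kalpha_im : Kalpha.im = Real.sqrt 7 / 2 := by simp [Kalpha]

lemma exists_int_im_eq_of_mem_span_one_Kalpha {z : ℂ} (hz : z ∈ Submodule.span ℤ {1, Kalpha}) :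
    ∃ b : ℤ, z.im = b * (Real.sqrt 7 / 2) := by
  obtain ⟨a, b, rfl⟩ := Submodule.mem_span_pair.mp hz
  exact ⟨b, by simp [Kalpha_im]⟩

lemma apply_zero_mem_span_one_Kalpha_of_mem_LambdaZ {v : Fin 3 → ℂ} (hv : v ∈ LambdaZ) :
    v 0 ∈ Submodule.span ℤ {1, Kalpha} := by
  refine Submodule.span_le.mpr ?_ (Submodule.apply_mem_span_image_of_mem_span (LinearMap.proj 0) hv)
  simp [Set.image_insert_eq, Set.insert_subset_iff, Ke1, Ke2, Ke3, Submodule.mem_span_of_mem]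

lemma eta1_zero_notMem_span_one_Kalpha : eta1 0 ∉ Submodule.span ℤ {1, Kalpha} := by
  intro h
  obtain ⟨b, hb⟩ := exists_int_im_eq_of_mem_span_one_Kalpha h
  have hsqrt : Real.sqrt 7 ≠ 0 := by positivity
  have hb' : Real.sqrt 7 / 7 = b * (Real.sqrt 7 / 2) := by simpa [eta1] using hb
  field_simp at hb'
  have : (2 : ℤ) = 7 * b := by exact_mod_cast hb'
  omega

/-- `η₁` is a fixed point of `g₇` on `J = ℂ³/Λ`: `g₇η₁ - η₁ ∈ Λ`;
moreover `η₁ ∉ Λ`, so this fixed point is nonzero. -/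
theorem eta1_is_nonzero_fixed_point_of_g7 :
    g7.mulVec eta1 - eta1 ∈ LambdaZ ∧ eta1 ∉ LambdaZ := by
  have gen : ∀ {v}, v ∈ ({Ke1, Ke2, Ke3, Kalpha • Ke1, Kalpha • Ke2, Kalpha • Ke3} :
      Set (Fin 3 → ℂ)) → v ∈ LambdaZ := fun hv => Submodule.subset_span hv
  constructor
  · rw [g7_mulVec_eta1_sub_eta1]
    exact add_mem (add_mem (add_mem (neg_mem (gen (by simp))) (gen (by simp))) (gen (by simp)))
      (gen (by simp))
  · exact fun h => eta1_zero_notMem_span_one_Kalpha (apply_zero_mem_span_one_Kalpha_of_mem_LambdaZ h)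

end
end

section
/- The set of points of J = C³/Λ fixed by the S₃-subgroup generated by −r₁ : (z₁,z₂,z₃) ↦ (−z₁,−z₃,−z₂) and the cyclic permutation (z₁,z₂,z₃) ↦ (z₃,z₁,z₂) consists of exactly 4 points: the classes of ι₁·(ᾱ,ᾱ,ᾱ)/2 + ι₂·(1,1,1) with ι₁, ι₂ ∈ {0,1}. -/
noncomputable section

/-- Representatives `ι₁·(ᾱ,ᾱ,ᾱ)/2 + ι₂·(1,1,1)`, `ι₁,ι₂ ∈ {0,1}`. -/
def omegaPt (i j : ℂ) : Fin 3 → ℂ :=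
  i • ![Kalphabar/2, Kalphabar/2, Kalphabar/2] + j • ![1,1,1]

/-! Writing vectors of `ℤ[α]³` in integer coordinates, `Λ` is cut out by three parity
conditions. The cyclic permutation moves `z` by a lattice vector only if `z` is congruent to a
diagonal vector `(w, w, w)`, and `−r₁` then moves it by `−2(w, w, w)`. The diagonal of `Λ` is
`ᾱ ℤ[α] · (1, 1, 1)`, so the fixed points are the classes of `(ᾱ/2) ℤ[α] · (1, 1, 1)` modulo
`ᾱ ℤ[α] · (1, 1, 1)`, that is of `(ᾱ/2)(ι₁ + ι₂ α) · (1, 1, 1) = omegaPt ι₁ ι₂`. -/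

theorem intCast_add_mul_eq_iff {τ : ℂ} (hτ : τ.im ≠ 0) {a b c d : ℤ} :
    (a : ℂ) + b * τ = c + d * τ ↔ a = c ∧ b = d := by
  refine ⟨fun h => ?_, fun ⟨hac, hbd⟩ => by rw [hac, hbd]⟩
  have hbd : b = d := by
    have him := congrArg Complex.im h
    simp only [Complex.add_im, Complex.intCast_im, Complex.mul_im, Complex.intCast_re,
      zero_mul, zero_add, add_zero] at him
    exact_mod_cast mul_right_cancel₀ hτ him
  subst hbd
  exact ⟨by exact_mod_cast add_right_cancel h, rfl⟩

theorem AddSubgroupClass.map_sub_self_mem_add_iff {M S : Type*} [AddCommGroup M] [SetLike S M]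
    [AddSubgroupClass S M] {L : S} {f : M →+ M} (hf : ∀ v ∈ L, f v ∈ L) {w : M} (hw : w ∈ L)
    (z : M) : f (z + w) - (z + w) ∈ L ↔ f z - z ∈ L := by
  rw [map_add, show f z + f w - (z + w) = (f z - z) + (f w - w) by abel,
    add_mem_cancel_right (sub_mem (hf w hw) hw)]

theorem Kalphabar_mul_Kalpha : Kalphabar * Kalpha = 2 := by
  linear_combination Kalpha * Kalphabar_eq - Kalpha_mul_self

theorem Kalpha_im_ne_zero : Kalpha.im ≠ 0 := by
  simp [Kalpha]

def ofCoords (x y : Fin 3 → ℤ) : Fin 3 → ℂ := fun k => x k + y k * Kalpha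

theorem ofCoords_apply (x y : Fin 3 → ℤ) (k : Fin 3) : ofCoords x y k = x k + y k * Kalpha :=
  rfl

theorem mem_LambdaZ_iff_exists_int {v : Fin 3 → ℂ} : v ∈ LambdaZ ↔ ∃ a b c d e f : ℤ,
    v = a • Ke1 + b • Ke2 + c • Ke3 + d • (Kalpha • Ke1) + e • (Kalpha • Ke2)
      + f • (Kalpha • Ke3) := by
  simp only [LambdaZ, Submodule.mem_span_insert, Submodule.mem_span_singleton]
  constructor
  · rintro ⟨a, _, ⟨b, _, ⟨c, _, ⟨d, _, ⟨e, _, ⟨f, rfl⟩, rfl⟩, rfl⟩, rfl⟩, rfl⟩, rfl⟩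
    exact ⟨a, b, c, d, e, f, by module⟩
  · rintro ⟨a, b, c, d, e, f, rfl⟩
    exact ⟨a, _, ⟨b, _, ⟨c, _, ⟨d, _, ⟨e, _, ⟨f, rfl⟩, rfl⟩, rfl⟩, rfl⟩, rfl⟩, by module⟩

theorem int_combination_eq_ofCoords (a b c d e f : ℤ) :
    a • Ke1 + b • Ke2 + c • Ke3 + d • (Kalpha • Ke1) + e • (Kalpha • Ke2) + f • (Kalpha • Ke3)
      = ofCoords ![c, c - 2 * d, 2 * b + c - 2 * d + 2 * f] ![f, a + d + f, a - c + d + 2 * e] := by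
  funext k
  fin_cases k <;>
    simp only [Ke1, Ke2, Ke3, ofCoords_apply, Pi.add_apply, Pi.smul_apply, zsmul_eq_mul,
      smul_eq_mul, Pi.mul_apply, Pi.intCast_apply, Fin.zero_eta, Fin.mk_one, Fin.reduceFinMk,
      Fin.isValue, Matrix.cons_val] <;>
    push_cast
  · ring
  · linear_combination (d : ℂ) * Kalpha_mul_self
  · linear_combination ((d : ℂ) - f) * Kalpha_mul_self + ((c : ℂ) + f * Kalpha) * Kalphabar_eq

theorem mem_LambdaZ_iff {v : Fin 3 → ℂ} : v ∈ LambdaZ ↔ ∃ x y : Fin 3 → ℤ, v = ofCoords x y ∧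
    2 ∣ x 0 - x 1 ∧ 2 ∣ x 0 - x 2 ∧ 2 ∣ y 0 + y 1 + y 2 + x 0 := by
  rw [mem_LambdaZ_iff_exists_int]
  constructor
  · rintro ⟨a, b, c, d, e, f, rfl⟩
    refine ⟨_, _, int_combination_eq_ofCoords a b c d e f, ?_, ?_, ?_⟩ <;>
      simp only [Fin.isValue, Matrix.cons_val] <;> omega
  · rintro ⟨x, y, rfl, ⟨k₁, hk₁⟩, ⟨k₂, hk₂⟩, ⟨k₃, hk₃⟩⟩
    refine ⟨y 1 - k₁ - y 0, k₁ - k₂ - y 0, x 0, k₁, k₃ - y 1, y 0, ?_⟩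
    rw [int_combination_eq_ofCoords]
    congr 1 <;> funext k <;> fin_cases k <;>
      simp only [Fin.zero_eta, Fin.mk_one, Fin.reduceFinMk, Fin.isValue, Matrix.cons_val] <;> omega

theorem const_mem_LambdaZ_iff {w : ℂ} :
    Function.const (Fin 3) w ∈ LambdaZ ↔ ∃ a b : ℤ, w = Kalphabar * (a + b * Kalpha) := by
  rw [mem_LambdaZ_iff]
  constructor
  · rintro ⟨x, y, hxy, h₁, h₂, h₃⟩
    have hcoord (k : Fin 3) : w = x k + y k * Kalpha := congrFun hxy k
    obtain ⟨hx₁, hy₁⟩ :=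
      (intCast_add_mul_eq_iff Kalpha_im_ne_zero).1 ((hcoord 0).symm.trans (hcoord 1))
    obtain ⟨hx₂, hy₂⟩ :=
      (intCast_add_mul_eq_iff Kalpha_im_ne_zero).1 ((hcoord 0).symm.trans (hcoord 2))
    obtain ⟨m, hm⟩ : ∃ m, x 0 + y 0 = 2 * m := ⟨(x 0 + y 0) / 2, by omega⟩
    refine ⟨-y 0, m, ?_⟩
    rw [hcoord 0, Kalphabar_eq]
    have hmC : ((x 0 : ℤ) : ℂ) + y 0 = 2 * m := by exact_mod_cast hm
    push_cast
    linear_combination hmC + (m : ℂ) * Kalpha_mul_self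
  · rintro ⟨a, b, rfl⟩
    refine ⟨fun _ => a + 2 * b, fun _ => -a, ?_, ?_, ?_, ?_⟩
    · funext k
      simp only [Function.const_apply, ofCoords_apply, Kalphabar_eq]
      push_cast
      linear_combination -(b : ℂ) * Kalpha_mul_self
    all_goals simp only; omega

def negR1 : (Fin 3 → ℂ) →+ (Fin 3 → ℂ) :=
  AddMonoidHom.mk' (fun z => ![-z 0, -z 2, -z 1]) fun z w => by
    funext k; fin_cases k <;> simp [add_comm]

def cycPerm : (Fin 3 → ℂ) →+ (Fin 3 → ℂ) :=
  AddMonoidHom.mk' (fun z => ![z 2, z 0, z 1]) fun z w => by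
    funext k; fin_cases k <;> rfl

theorem negR1_mem_LambdaZ {v : Fin 3 → ℂ} (hv : v ∈ LambdaZ) : negR1 v ∈ LambdaZ := by
  obtain ⟨x, y, rfl, h₁, h₂, h₃⟩ := mem_LambdaZ_iff.1 hv
  refine mem_LambdaZ_iff.2 ⟨![-x 0, -x 2, -x 1], ![-y 0, -y 2, -y 1], ?_, ?_, ?_, ?_⟩
  · funext k
    fin_cases k <;>
      simp only [negR1, AddMonoidHom.mk'_apply, ofCoords_apply, Fin.zero_eta, Fin.mk_one,
        Fin.reduceFinMk, Fin.isValue, Matrix.cons_val] <;>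
      push_cast <;> ring
  all_goals simp only [Fin.isValue, Matrix.cons_val]; omega

theorem cycPerm_mem_LambdaZ {v : Fin 3 → ℂ} (hv : v ∈ LambdaZ) : cycPerm v ∈ LambdaZ := by
  obtain ⟨x, y, rfl, h₁, h₂, h₃⟩ := mem_LambdaZ_iff.1 hv
  refine mem_LambdaZ_iff.2 ⟨![x 2, x 0, x 1], ![y 2, y 0, y 1], ?_, ?_, ?_, ?_⟩
  · funext k; fin_cases k <;> rfl
  all_goals simp only [Fin.isValue, Matrix.cons_val]; omega

/-- `z` represents a point of `J = ℂ³/Λ` fixed by `−r₁` and the cyclic permutation. -/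
def IsS3Fixed (z : Fin 3 → ℂ) : Prop :=
  negR1 z - z ∈ LambdaZ ∧ cycPerm z - z ∈ LambdaZ

theorem isS3Fixed_add_iff {w : Fin 3 → ℂ} (hw : w ∈ LambdaZ) (z : Fin 3 → ℂ) :
    IsS3Fixed (z + w) ↔ IsS3Fixed z :=
  and_congr (AddSubgroupClass.map_sub_self_mem_add_iff (fun _ => negR1_mem_LambdaZ) hw z)
    (AddSubgroupClass.map_sub_self_mem_add_iff (fun _ => cycPerm_mem_LambdaZ) hw z)

theorem exists_sub_const_mem_LambdaZ {z : Fin 3 → ℂ} (h : cycPerm z - z ∈ LambdaZ) :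
    ∃ w : ℂ, z - Function.const (Fin 3) w ∈ LambdaZ := by
  obtain ⟨P, Q, hPQ, hP₁, hP₂, -⟩ := mem_LambdaZ_iff.1 h
  have hcoord (k : Fin 3) : cycPerm z k - z k = P k + Q k * Kalpha := congrFun hPQ k
  have e₀ := hcoord 0
  have e₁ := hcoord 1
  have e₂ := hcoord 2
  simp only [cycPerm, AddMonoidHom.mk'_apply, Matrix.cons_val_zero, Matrix.cons_val_one,
    Matrix.cons_val_two, Matrix.head_cons, Matrix.tail_cons] at e₀ e₁ e₂
  -- the coordinates of `cycPerm z - z` sum to zero, which forces `P` to be even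
  have hPsum : P 0 + P 1 + P 2 = 0 := by
    refine ((intCast_add_mul_eq_iff Kalpha_im_ne_zero (b := Q 0 + Q 1 + Q 2) (d := 0)).1 ?_).1
    push_cast
    linear_combination -e₀ - e₁ - e₂
  refine ⟨z 0 + (Q 0 - Q 1 : ℤ) * Kalpha,
    mem_LambdaZ_iff.2 ⟨![0, -P 1, P 0], ![Q 1 - Q 0, -Q 0, Q 1], ?_, ?_, ?_, ?_⟩⟩
  · funext k
    fin_cases k <;>
      simp only [ofCoords_apply, Pi.sub_apply, Function.const_apply, Fin.zero_eta, Fin.mk_one,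
        Fin.reduceFinMk, Fin.isValue, Matrix.cons_val] <;>
      push_cast
    · ring
    · linear_combination -e₁
    · linear_combination e₀
  all_goals simp only [Fin.isValue, Matrix.cons_val]; omega

theorem isS3Fixed_const_iff {w : ℂ} : IsS3Fixed (Function.const (Fin 3) w) ↔
    ∃ a b : ℤ, w = Kalphabar / 2 * (a + b * Kalpha) := by
  have hneg : negR1 (Function.const (Fin 3) w) - Function.const (Fin 3) w
      = -Function.const (Fin 3) (2 * w) := by
    funext k
    fin_cases k <;>
      simp only [negR1, AddMonoidHom.mk'_apply, Pi.sub_apply, Pi.neg_apply, Function.const_apply,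
        Fin.zero_eta, Fin.mk_one, Fin.reduceFinMk, Fin.isValue, Matrix.cons_val] <;>
      ring
  have hcyc : cycPerm (Function.const (Fin 3) w) = Function.const (Fin 3) w := by
    funext k; fin_cases k <;> rfl
  rw [IsS3Fixed, hneg, hcyc, sub_self, neg_mem_iff, const_mem_LambdaZ_iff]
  simp only [zero_mem, and_true]
  refine exists₂_congr fun a b => ?_
  exact ⟨fun h => by linear_combination h / 2, fun h => by linear_combination 2 * h⟩

theorem omegaPt_eq_const (i j : ℂ) :
    omegaPt i j = Function.const (Fin 3) (Kalphabar / 2 * (i + j * Kalpha)) := by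
  funext k
  fin_cases k <;>
    simp only [omegaPt, Pi.add_apply, Pi.smul_apply, smul_eq_mul, Function.const_apply,
      Fin.zero_eta, Fin.mk_one, Fin.reduceFinMk, Fin.isValue, Matrix.cons_val] <;>
    linear_combination -j / 2 * Kalphabar_mul_Kalpha

theorem omegaPt_sub (i j i' j' : ℂ) :
    omegaPt i j - omegaPt i' j' = omegaPt (i - i') (j - j') := by
  simp only [omegaPt, sub_smul]; abel

theorem omegaPt_intCast_mem_LambdaZ_iff (a b : ℤ) :
    omegaPt a b ∈ LambdaZ ↔ Even a ∧ Even b := by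
  rw [omegaPt_eq_const, const_mem_LambdaZ_iff]
  constructor
  · rintro ⟨c, d, h⟩
    -- multiplying by `α` and using `ᾱ α = 2` cancels `ᾱ`
    have h' : (a : ℂ) + b * Kalpha = (2 * c : ℤ) + (2 * d : ℤ) * Kalpha := by
      push_cast
      linear_combination
        Kalpha * h - ((a : ℂ) / 2 + b / 2 * Kalpha - c - d * Kalpha) * Kalphabar_mul_Kalpha
    obtain ⟨rfl, rfl⟩ := (intCast_add_mul_eq_iff Kalpha_im_ne_zero).1 h'
    exact ⟨⟨c, two_mul c⟩, ⟨d, two_mul d⟩⟩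
  · rintro ⟨⟨c, rfl⟩, ⟨d, rfl⟩⟩
    exact ⟨c, d, by push_cast; ring⟩

theorem omegaPt_sub_omegaPt_mem_LambdaZ_iff (a b a' b' : ℤ) :
    omegaPt a b - omegaPt a' b' ∈ LambdaZ ↔ a ≡ a' [ZMOD 2] ∧ b ≡ b' [ZMOD 2] := by
  rw [omegaPt_sub, ← Int.cast_sub, ← Int.cast_sub, omegaPt_intCast_mem_LambdaZ_iff,
    Int.even_iff, Int.even_iff, Int.ModEq, Int.ModEq]
  omega

theorem isS3Fixed_iff_exists_int {z : Fin 3 → ℂ} :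
    IsS3Fixed z ↔ ∃ a b : ℤ, z - omegaPt a b ∈ LambdaZ := by
  constructor
  · intro hz
    obtain ⟨w, hw⟩ := exists_sub_const_mem_LambdaZ hz.2
    obtain ⟨a, b, rfl⟩ :=
      isS3Fixed_const_iff.1 ((isS3Fixed_add_iff hw _).1 (by rwa [add_sub_cancel]))
    exact ⟨a, b, by rwa [omegaPt_eq_const]⟩
  · rintro ⟨a, b, hz⟩
    have hfix : IsS3Fixed (omegaPt a b) := by
      rw [omegaPt_eq_const]
      exact isS3Fixed_const_iff.2 ⟨a, b, rfl⟩
    simpa only [add_sub_cancel] using (isS3Fixed_add_iff hz _).2 hfix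

theorem exists_intCast_of_eq_zero_or_eq_one {i : ℂ} (hi : i = 0 ∨ i = 1) :
    ∃ a : ℤ, (a = 0 ∨ a = 1) ∧ i = a := by
  rcases hi with rfl | rfl
  exacts [⟨0, by simp⟩, ⟨1, by simp⟩]

/-- The points of `J = ℂ³/Λ` fixed by the `S₃`-subgroup generated by
`-r₁ : (z₁,z₂,z₃) ↦ (-z₁,-z₃,-z₂)` and the cyclic permutation
`(z₁,z₂,z₃) ↦ (z₃,z₁,z₂)` are exactly the `4` pairwise distinct classes of
`ι₁·(ᾱ,ᾱ,ᾱ)/2 + ι₂·(1,1,1)`, `ι₁,ι₂ ∈ {0,1}`. -/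
theorem fixed_points_of_S3 :
    (∀ z : Fin 3 → ℂ,
      ((![-z 0, -z 2, -z 1] - z ∈ LambdaZ) ∧ (![z 2, z 0, z 1] - z ∈ LambdaZ)) ↔
      (∃ i j : ℂ, (i = 0 ∨ i = 1) ∧ (j = 0 ∨ j = 1) ∧ z - omegaPt i j ∈ LambdaZ)) ∧
    (∀ i j i' j' : ℂ, (i = 0 ∨ i = 1) → (j = 0 ∨ j = 1) → (i' = 0 ∨ i' = 1) →
      (j' = 0 ∨ j' = 1) → (i, j) ≠ (i', j') →
      omegaPt i j - omegaPt i' j' ∉ LambdaZ) := by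
  refine ⟨fun z => ⟨fun hz => ?_, fun ⟨i, j, hi, hj, hz⟩ => ?_⟩, ?_⟩
  · obtain ⟨a, b, hab⟩ := isS3Fixed_iff_exists_int.1 hz
    have hred := (omegaPt_sub_omegaPt_mem_LambdaZ_iff a b (a % 2) (b % 2)).2
      ⟨(Int.mod_modEq a 2).symm, (Int.mod_modEq b 2).symm⟩
    refine ⟨(a % 2 : ℤ), (b % 2 : ℤ), ?_, ?_, sub_add_sub_cancel z _ _ ▸ add_mem hab hred⟩
    · rcases Int.emod_two_eq_zero_or_one a with h | h <;> simp [h]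
    · rcases Int.emod_two_eq_zero_or_one b with h | h <;> simp [h]
  · obtain ⟨a, -, rfl⟩ := exists_intCast_of_eq_zero_or_eq_one hi
    obtain ⟨b, -, rfl⟩ := exists_intCast_of_eq_zero_or_eq_one hj
    exact isS3Fixed_iff_exists_int.2 ⟨a, b, hz⟩
  · intro i j i' j' hi hj hi' hj' hne hmem
    obtain ⟨a, ha, rfl⟩ := exists_intCast_of_eq_zero_or_eq_one hi
    obtain ⟨b, hb, rfl⟩ := exists_intCast_of_eq_zero_or_eq_one hj
    obtain ⟨a', ha', rfl⟩ := exists_intCast_of_eq_zero_or_eq_one hi'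
    obtain ⟨b', hb', rfl⟩ := exists_intCast_of_eq_zero_or_eq_one hj'
    obtain ⟨hamod, hbmod⟩ := (omegaPt_sub_omegaPt_mem_LambdaZ_iff a b a' b').1 hmem
    exact hne (by rw [show a = a' by unfold Int.ModEq at hamod; omega,
      show b = b' by unfold Int.ModEq at hbmod; omega])

end
end
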